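/- arXiv:1208.1781 — 3 statements merged into one kernel-verified Lean document; each statement's English description precedes it below -/
import Mathlib

section
/- Let M be a symmetric positive definite n×n real matrix and G a symmetric positive semi-definite n×n real matrix. For any vector x in the range of M⁻¹G, one has ⟨Mx, x⟩ = max over nonzero y in the range of G of ⟨y, x⟩² / ⟨M⁻¹y, y⟩. -/
open Matrix

/-! Cauchy–Schwarz for the inner product `⟨u, v⟩_M = ⟨Mu, v⟩`, applied to `M⁻¹y` and `x`, gives
`⟨y, x⟩² ≤ ⟨M⁻¹y, y⟩ ⟨Mx, x⟩` for every `y`, with equality at `y = Mx`; and `Mx` lies in the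
range of `G` when `x` lies in the range of `M⁻¹G`. -/

namespace Matrix

variable {n : Type*} [Fintype n]

theorem PosSemidef.sq_dotProduct_mulVec_le {A : Matrix n n ℝ} (hA : A.PosSemidef) (u v : n → ℝ) :
    (u ⬝ᵥ A *ᵥ v) ^ 2 ≤ (u ⬝ᵥ A *ᵥ u) * (v ⬝ᵥ A *ᵥ v) := by
  let := A.toSeminormedAddCommGroup hA
  let := A.toInnerProductSpace hA
  have := real_inner_mul_inner_self_le u v
  change (A *ᵥ v) ⬝ᵥ star u * ((A *ᵥ v) ⬝ᵥ star u) ≤ (A *ᵥ u) ⬝ᵥ star u * ((A *ᵥ v) ⬝ᵥ star v)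
    at this
  simpa only [star_trivial, dotProduct_comm _ (A *ᵥ _), sq] using this

variable [DecidableEq n] {M : Matrix n n ℝ}

theorem PosDef.mulVec_inv_mulVec (hM : M.PosDef) (y : n → ℝ) : M *ᵥ (M⁻¹ *ᵥ y) = y := by
  rw [mulVec_mulVec, mul_nonsing_inv _ (M.isUnit_iff_isUnit_det.mp hM.isUnit), one_mulVec]

theorem PosDef.inv_mulVec_mulVec (hM : M.PosDef) (x : n → ℝ) : M⁻¹ *ᵥ (M *ᵥ x) = x := by
  rw [mulVec_mulVec, nonsing_inv_mul _ (M.isUnit_iff_isUnit_det.mp hM.isUnit), one_mulVec]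

theorem PosDef.inv_mulVec_dotProduct_pos (hM : M.PosDef) {y : n → ℝ} (hy : y ≠ 0) :
    0 < M⁻¹ *ᵥ y ⬝ᵥ y := by
  simpa only [star_trivial, dotProduct_comm y] using hM.inv.dotProduct_mulVec_pos hy

theorem PosDef.sq_dotProduct_le (hM : M.PosDef) (x y : n → ℝ) :
    (y ⬝ᵥ x) ^ 2 ≤ (M⁻¹ *ᵥ y ⬝ᵥ y) * (M *ᵥ x ⬝ᵥ x) := by
  have hMt : Mᵀ = M := hM.isHermitian.eq
  have hMu : M⁻¹ *ᵥ y ⬝ᵥ M *ᵥ x = y ⬝ᵥ x := by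
    rw [dotProduct_mulVec, ← mulVec_transpose, hMt, hM.mulVec_inv_mulVec]
  simpa only [hMu, hM.mulVec_inv_mulVec, dotProduct_comm x]
    using hM.posSemidef.sq_dotProduct_mulVec_le (M⁻¹ *ᵥ y) x

theorem PosDef.isGreatest_sq_dotProduct_div (hM : M.PosDef) {S : Set (n → ℝ)} {x : n → ℝ}
    (hS : ∃ y ∈ S, y ≠ 0) (hx : M *ᵥ x ∈ S) :
    IsGreatest {r | ∃ y ∈ S, y ≠ 0 ∧ r = (y ⬝ᵥ x) ^ 2 / (M⁻¹ *ᵥ y ⬝ᵥ y)} (M *ᵥ x ⬝ᵥ x) := by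
  refine ⟨?_, ?_⟩
  · by_cases hx0 : x = 0
    · obtain ⟨y, hyS, hy⟩ := hS
      exact ⟨y, hyS, hy, by simp [hx0]⟩
    · have hMx : M *ᵥ x ≠ 0 := fun h ↦ hx0 (by rw [← hM.inv_mulVec_mulVec x, h, mulVec_zero])
      refine ⟨M *ᵥ x, hx, hMx, ?_⟩
      rw [hM.inv_mulVec_mulVec, dotProduct_comm x, sq, mul_self_div_self]
  · rintro r ⟨y, -, hy, rfl⟩
    rw [div_le_iff₀ (hM.inv_mulVec_dotProduct_pos hy), mul_comm]
    exact hM.sq_dotProduct_le x y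

end Matrix

theorem stmt_1_general (n : ℕ) (M G : Matrix (Fin n) (Fin n) ℝ)
    (hM : M.PosDef) (hGne : G ≠ 0)
    (x : Fin n → ℝ) (hx : ∃ z, x = M⁻¹ *ᵥ (G *ᵥ z)) :
    IsGreatest
      {r : ℝ | ∃ y, (∃ z, y = G *ᵥ z) ∧ y ≠ 0 ∧
        r = (y ⬝ᵥ x) ^ 2 / ((M⁻¹ *ᵥ y) ⬝ᵥ y)}
      ((M *ᵥ x) ⬝ᵥ x) := by
  obtain ⟨z, rfl⟩ := hx
  obtain ⟨i, hi⟩ : ∃ i, G *ᵥ Pi.single i 1 ≠ 0 := by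
    by_contra! h
    exact hGne (ext_of_mulVec_single fun i ↦ by rw [h, zero_mulVec])
  exact hM.isGreatest_sq_dotProduct_div (S := {y | ∃ z, y = G *ᵥ z})
    ⟨_, ⟨_, rfl⟩, hi⟩ ⟨z, hM.mulVec_inv_mulVec _⟩

/-- Lemma 5.7 of the paper: for `M` SPD and `G` symmetric PSD (nonzero),
for any `x` in the range of `M⁻¹G`,
`⟨Mx, x⟩` is the maximum over nonzero `y` in the range of `G`
of `⟨y, x⟩² / ⟨M⁻¹y, y⟩`. -/
theorem stmt_1 (n : ℕ) (M G : Matrix (Fin n) (Fin n) ℝ)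
    (hM : M.PosDef) (hG : G.PosSemidef) (hGne : G ≠ 0)
    (x : Fin n → ℝ) (hx : ∃ z, x = M⁻¹ *ᵥ (G *ᵥ z)) :
    IsGreatest
      {r : ℝ | ∃ y, (∃ z, y = G *ᵥ z) ∧ y ≠ 0 ∧
        r = (y ⬝ᵥ x) ^ 2 / ((M⁻¹ *ᵥ y) ⬝ᵥ y)}
      ((M *ᵥ x) ⬝ᵥ x) :=
  stmt_1_general n M G hM hGne x hx
end

section
/- Let A be symmetric positive definite n×n and B an m×n matrix satisfying the inf-sup condition: for all q ⊥ ker(B^T), sup_{w≠0} ⟨q,Bw⟩²/⟨w,Aw⟩ ≥ β²⟨q,Zq⟩ with Z symmetric positive definite and β > 0. Then for every g in the range of B there exists u with Bu = g and ⟨u, Au⟩ ≤ (1/β²)⟨g, Z⁻¹g⟩. -/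
/-!
Let `S = B A⁻¹ Bᵀ` be the Schur complement. Since `range B ⊥ ker Bᵀ`, `S` is injective on
`range B`, so there is `p ∈ range B` with `S p = g`; put `u = A⁻¹ Bᵀ p`. Then `B u = g`,
`⟨u, A u⟩ = ⟨p, g⟩`, and `Bᵀ p = A u`, so Cauchy–Schwarz for the `A`-inner product bounds
the inf-sup quotient of `p` by `⟨u, A u⟩`. Hence `β² ⟨p, Z p⟩ ≤ ⟨p, g⟩`, while Cauchy–Schwarz
for `Z` gives `⟨p, g⟩² ≤ ⟨p, Z p⟩ ⟨g, Z⁻¹ g⟩`; together `⟨p, g⟩ ≤ β⁻² ⟨g, Z⁻¹ g⟩`.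
-/

open Matrix

namespace Matrix

variable {ι κ : Type*} [Fintype ι] [Fintype κ]

theorem PosSemidef.sq_dotProduct_mulVec_le_s8 {M : Matrix ι ι ℝ} (hM : M.PosSemidef)
    (x y : ι → ℝ) : (x ⬝ᵥ (M *ᵥ y)) ^ 2 ≤ (x ⬝ᵥ (M *ᵥ x)) * (y ⬝ᵥ (M *ᵥ y)) := by
  classical
  have hsymm : LinearMap.IsSymm M.toBilin' := LinearMap.BilinForm.isSymm_iff.mp <|
    isSymm_toBilin'_iff_isSymm.mpr (isHermitian_iff_isSymm.mp hM.isHermitian)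
  have hnonneg (z : ι → ℝ) : 0 ≤ M.toBilin' z z := by
    simpa only [toBilin'_apply', star_trivial] using hM.dotProduct_mulVec_nonneg z
  simpa only [toBilin'_apply'] using M.toBilin'.apply_sq_le_of_symm hnonneg hsymm x y

theorem PosDef.sq_dotProduct_le_s8 [DecidableEq κ] {Z : Matrix κ κ ℝ} (hZ : Z.PosDef)
    (p g : κ → ℝ) : (p ⬝ᵥ g) ^ 2 ≤ (p ⬝ᵥ (Z *ᵥ p)) * (g ⬝ᵥ (Z⁻¹ *ᵥ g)) := by
  have hg : Z *ᵥ (Z⁻¹ *ᵥ g) = g := by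
    rw [mulVec_mulVec, mul_nonsing_inv _ hZ.det_pos.ne'.isUnit, one_mulVec]
  have := hZ.posSemidef.sq_dotProduct_mulVec_le_s8 p (Z⁻¹ *ᵥ g)
  rwa [hg, dotProduct_comm (Z⁻¹ *ᵥ g)] at this

theorem PosSemidef.sSup_sq_dotProduct_mulVec_div_le {A : Matrix ι ι ℝ} (hA : A.PosSemidef)
    (u : ι → ℝ) :
    sSup {r : ℝ | ∃ w : ι → ℝ, w ≠ 0 ∧ r = (u ⬝ᵥ (A *ᵥ w)) ^ 2 / (w ⬝ᵥ (A *ᵥ w))} ≤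
      u ⬝ᵥ (A *ᵥ u) := by
  have hnonneg (z : ι → ℝ) : 0 ≤ z ⬝ᵥ (A *ᵥ z) := by
    simpa only [star_trivial] using hA.dotProduct_mulVec_nonneg z
  refine Real.sSup_le ?_ (hnonneg u)
  rintro r ⟨w, -, rfl⟩
  exact div_le_of_le_mul₀ (hnonneg w) (hnonneg u) (hA.sq_dotProduct_mulVec_le_s8 u w)

theorem ker_mulVecLin_mul_mul_transpose_mul {M : Matrix ι ι ℝ} (hM : M.PosDef)
    (B : Matrix κ ι ℝ) :
    LinearMap.ker (B * M * Bᵀ * B).mulVecLin = LinearMap.ker B.mulVecLin := by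
  ext v
  simp only [LinearMap.mem_ker, mulVecLin_apply]
  refine ⟨fun hv ↦ ?_, fun hv ↦ by rw [← mulVec_mulVec, hv, mulVec_zero]⟩
  have hquad : (Bᵀ *ᵥ (B *ᵥ v)) ⬝ᵥ (M *ᵥ (Bᵀ *ᵥ (B *ᵥ v))) = 0 := by
    have : (B *ᵥ v) ⬝ᵥ ((B * M * Bᵀ) *ᵥ (B *ᵥ v)) = 0 := by
      rw [mulVec_mulVec, hv, dotProduct_zero]
    rwa [← mulVec_mulVec, ← mulVec_mulVec, dotProduct_mulVec, ← mulVec_transpose] at this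
  have hBtB : (Bᵀ * B) *ᵥ v = 0 := by
    by_contra hne
    rw [← mulVec_mulVec] at hne
    simpa only [star_trivial, hquad, lt_irrefl] using hM.dotProduct_mulVec_pos hne
  simpa only [LinearMap.mem_ker, mulVecLin_apply] using
    (ker_mulVecLin_transpose_mul_self B).le (LinearMap.mem_ker.mpr hBtB)

theorem range_mulVecLin_mul_mul_transpose_mul {M : Matrix ι ι ℝ} (hM : M.PosDef)
    (B : Matrix κ ι ℝ) :
    LinearMap.range (B * M * Bᵀ * B).mulVecLin = LinearMap.range B.mulVecLin := by
  have hle : LinearMap.range (B * M * Bᵀ * B).mulVecLin ≤ LinearMap.range B.mulVecLin := by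
    rw [Matrix.mul_assoc, Matrix.mul_assoc, mulVecLin_mul]
    exact LinearMap.range_comp_le_range _ _
  refine Submodule.eq_of_le_of_finrank_eq hle ?_
  have h₁ := LinearMap.finrank_range_add_finrank_ker (B * M * Bᵀ * B).mulVecLin
  have h₂ := LinearMap.finrank_range_add_finrank_ker B.mulVecLin
  rw [ker_mulVecLin_mul_mul_transpose_mul hM] at h₁
  omega

end Matrix

theorem le_one_div_sq_mul {β a c e : ℝ} (hβ : 0 < β) (he : 0 ≤ e) (hc : 0 ≤ c)
    (hlow : β ^ 2 * a ≤ e) (hcs : e ^ 2 ≤ a * c) : e ≤ 1 / β ^ 2 * c := by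
  rw [one_div_mul_eq_div, le_div_iff₀ (by positivity)]
  rcases he.eq_or_lt with rfl | hpos
  · simpa using hc
  · nlinarith [mul_le_mul_of_nonneg_right hlow hc]

/-- Consequence of the inf-sup condition (equation 2.4): the divergence
operator `B` admits a bounded right inverse on its range, i.e. for every
`g ∈ Range(B)` there is `u` with `Bu = g` and `⟨u, Au⟩ ≤ (1/β²)⟨g, Z⁻¹g⟩`. -/
theorem stmt_8 (n m : ℕ) (A : Matrix (Fin n) (Fin n) ℝ)
    (B : Matrix (Fin m) (Fin n) ℝ) (Z : Matrix (Fin m) (Fin m) ℝ)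
    (hA : A.PosDef) (hZ : Z.PosDef) (β : ℝ) (hβ : 0 < β)
    (hinfsup : ∀ q : Fin m → ℝ,
      (∀ q' : Fin m → ℝ, Bᵀ *ᵥ q' = 0 → q ⬝ᵥ q' = 0) →
      β ^ 2 * (q ⬝ᵥ (Z *ᵥ q)) ≤
        sSup {r : ℝ | ∃ w : Fin n → ℝ, w ≠ 0 ∧
          r = (q ⬝ᵥ (B *ᵥ w)) ^ 2 / (w ⬝ᵥ (A *ᵥ w))})
    (g : Fin m → ℝ) (hg : ∃ w, g = B *ᵥ w) :
    ∃ u : Fin n → ℝ, B *ᵥ u = g ∧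
      u ⬝ᵥ (A *ᵥ u) ≤ (1 / β ^ 2) * (g ⬝ᵥ (Z⁻¹ *ᵥ g)) := by
  obtain ⟨v, hv⟩ : g ∈ LinearMap.range (B * A⁻¹ * Bᵀ * B).mulVecLin := by
    obtain ⟨w, rfl⟩ := hg
    rw [range_mulVecLin_mul_mul_transpose_mul hA.inv]
    exact ⟨w, rfl⟩
  set p := B *ᵥ v
  set u := A⁻¹ *ᵥ (Bᵀ *ᵥ p)
  have hAu : A *ᵥ u = Bᵀ *ᵥ p := by
    rw [mulVec_mulVec, mul_nonsing_inv _ hA.det_pos.ne'.isUnit, one_mulVec]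
  have hBu : B *ᵥ u = g := by
    simp only [← hv, u, p, mulVecLin_apply, mulVec_mulVec, Matrix.mul_assoc]
  have hrepr (w : Fin n → ℝ) : p ⬝ᵥ (B *ᵥ w) = u ⬝ᵥ (A *ᵥ w) := by
    rw [dotProduct_mulVec, dotProduct_mulVec, ← mulVec_transpose, ← mulVec_transpose,
      (isHermitian_iff_isSymm.mp hA.isHermitian).eq, hAu]
  have henergy : u ⬝ᵥ (A *ᵥ u) = p ⬝ᵥ g := by
    rw [← hrepr, hBu]
  have hperp (q' : Fin m → ℝ) (hq' : Bᵀ *ᵥ q' = 0) : p ⬝ᵥ q' = 0 := by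
    rw [dotProduct_comm, dotProduct_mulVec, ← mulVec_transpose, hq', zero_dotProduct]
  have hlow : β ^ 2 * (p ⬝ᵥ (Z *ᵥ p)) ≤ p ⬝ᵥ g := by
    have := hinfsup p hperp
    simp_rw [hrepr] at this
    exact henergy ▸ this.trans (hA.posSemidef.sSup_sq_dotProduct_mulVec_div_le u)
  refine ⟨u, hBu, henergy ▸ le_one_div_sq_mul hβ ?_ ?_ hlow (hZ.sq_dotProduct_le_s8 p g)⟩
  · simpa only [henergy, star_trivial] using hA.posSemidef.dotProduct_mulVec_nonneg u
  · simpa only [star_trivial] using hZ.inv.posSemidef.dotProduct_mulVec_nonneg g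
end

section
/- Let à be symmetric positive definite, B_C an m×n matrix, G = B_C Ã⁻¹ B_C^T, and M symmetric positive definite. Suppose there is c > 0 such that for every y ∈ ℝ^m there exists w ∈ ℝⁿ with B_C w = y and ⟨Ãw, w⟩ ≤ (1/c)⟨M⁻¹y, y⟩. Then ⟨Gx, x⟩ ≥ c⟨Mx, x⟩ for all x ∈ ℝ^m. -/
/-!
With `u = Ã⁻¹ B_Cᵀ x` one has `⟨Gx, x⟩ = ⟨Ãu, u⟩` and `⟨B_C w, x⟩ = ⟨Ãu, w⟩`, so Cauchy–Schwarz for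
the inner product defined by `Ã` gives `⟨B_C w, x⟩² ≤ ⟨Ãw, w⟩ ⟨Gx, x⟩` for every `w`. Applying this
to the lift `w` of `y = Mx` yields `⟨Mx, x⟩² ≤ c⁻¹ ⟨Mx, x⟩ ⟨Gx, x⟩`, and one divides by `⟨Mx, x⟩ > 0`.
-/

open Matrix

namespace Matrix

variable {m n : Type*} [Fintype m] [Fintype n]

theorem PosSemidef.dotProduct_mulVec_mul_self_le {A : Matrix n n ℝ} (hA : A.PosSemidef)
    (u w : n → ℝ) : (A *ᵥ u ⬝ᵥ w) * (A *ᵥ u ⬝ᵥ w) ≤ (A *ᵥ w ⬝ᵥ w) * (A *ᵥ u ⬝ᵥ u) :=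
  @real_inner_mul_inner_self_le _ (A.toSeminormedAddCommGroup hA) (A.toInnerProductSpace hA) w u

theorem PosDef.mulVec_dotProduct_mul_self_le_mul_mul_inv_mul_transpose [DecidableEq n]
    {A : Matrix n n ℝ} (hA : A.PosDef) (B : Matrix m n ℝ) (w : n → ℝ) (x : m → ℝ) :
    (B *ᵥ w ⬝ᵥ x) * (B *ᵥ w ⬝ᵥ x) ≤ (A *ᵥ w ⬝ᵥ w) * ((B * A⁻¹ * Bᵀ) *ᵥ x ⬝ᵥ x) := by
  set u := A⁻¹ *ᵥ (Bᵀ *ᵥ x)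
  have hAu : A *ᵥ u = Bᵀ *ᵥ x := by
    rw [mulVec_mulVec, mul_nonsing_inv _ hA.det_pos.ne'.isUnit, one_mulVec]
  have hBw : B *ᵥ w ⬝ᵥ x = A *ᵥ u ⬝ᵥ w := by
    rw [hAu, dotProduct_comm, dotProduct_mulVec, ← mulVec_transpose]
  have hG : (B * A⁻¹ * Bᵀ) *ᵥ x ⬝ᵥ x = A *ᵥ u ⬝ᵥ u := by
    rw [hAu, ← mulVec_mulVec, ← mulVec_mulVec, dotProduct_comm, dotProduct_mulVec,
      ← mulVec_transpose]
  rw [hBw, hG]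
  exact hA.posSemidef.dotProduct_mulVec_mul_self_le u w

end Matrix

/-- Abstract lower bound argument of Theorem 6.3: if for every `y` there is
`w` with `B_C w = y` and `⟨Ãw, w⟩ ≤ (1/c)⟨M⁻¹y, y⟩`, then
`⟨Gx, x⟩ ≥ c ⟨Mx, x⟩` for all `x`, where `G = B_C Ã⁻¹ B_Cᵀ`. -/
theorem stmt_16 (n m : ℕ) (A : Matrix (Fin n) (Fin n) ℝ)
    (B : Matrix (Fin m) (Fin n) ℝ) (M : Matrix (Fin m) (Fin m) ℝ)
    (hA : A.PosDef) (hM : M.PosDef) (c : ℝ) (hc : 0 < c)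
    (hlift : ∀ y : Fin m → ℝ, ∃ w : Fin n → ℝ, B *ᵥ w = y ∧
      (A *ᵥ w) ⬝ᵥ w ≤ (1 / c) * ((M⁻¹ *ᵥ y) ⬝ᵥ y)) :
    ∀ x : Fin m → ℝ,
      c * ((M *ᵥ x) ⬝ᵥ x) ≤ ((B * A⁻¹ * Bᵀ) *ᵥ x) ⬝ᵥ x := by
  intro x
  rcases eq_or_ne x 0 with rfl | hx
  · simp
  set t := M *ᵥ x ⬝ᵥ x
  set g := (B * A⁻¹ * Bᵀ) *ᵥ x ⬝ᵥ x
  have ht : 0 < t := by simpa [t, dotProduct_comm] using hM.dotProduct_mulVec_pos hx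
  have hg : 0 ≤ g := by
    simpa [g, dotProduct_comm, conjTranspose_eq_transpose_of_trivial] using
      (hA.posSemidef.inv.mul_mul_conjTranspose_same B).dotProduct_mulVec_nonneg x
  obtain ⟨w, hw, hwA⟩ := hlift (M *ᵥ x)
  rw [mulVec_mulVec, nonsing_inv_mul _ hM.det_pos.ne'.isUnit, one_mulVec,
    dotProduct_comm x] at hwA
  have hcs := hA.mulVec_dotProduct_mul_self_le_mul_mul_inv_mul_transpose B w x
  rw [hw] at hcs
  refine le_of_mul_le_mul_right ?_ ht
  calc c * t * t = c * (t * t) := mul_assoc _ _ _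
    _ ≤ c * ((1 / c) * t * g) :=
      mul_le_mul_of_nonneg_left (hcs.trans (mul_le_mul_of_nonneg_right hwA hg)) hc.le
    _ = g * t := by field_simp
end
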